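/- arXiv:1609.00839 — 8 statements merged into one kernel-verified Lean document; each statement's English description precedes it below -/
import Mathlib

section
/- Let H be a hypersemigroup and A a nonempty subset of H. If A is an interior ideal of H, then the characteristic function f_A is a fuzzy interior ideal of H. -/
/-- Induced operation on subsets of a hypergroupoid: A*B = union of a∘b. -/
def sProd {H : Type*} (c : H → H → Set H) (A B : Set H) : Set H :=
  ⋃ a ∈ A, ⋃ b ∈ B, c a b

/-- Hypergroupoid: values of the hyperoperation are nonempty. -/
def IsHypergroupoid {H : Type*} (c : H → H → Set H) : Prop :=
  ∀ a b, (c a b).Nonempty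

/-- Hypersemigroup law. -/
def IsHypersemigroup {H : Type*} (c : H → H → Set H) : Prop :=
  IsHypergroupoid c ∧ ∀ x y z : H, sProd c {x} (c y z) = sProd c (c x y) {z}

/-- Fuzzy subset: map into [0,1]. -/
def IsFuzzy {H : Type*} (f : H → ℝ) : Prop := ∀ x, f x ∈ Set.Icc (0:ℝ) 1

def IsFuzzyLeftIdeal {H : Type*} (c : H → H → Set H) (f : H → ℝ) : Prop :=
  IsFuzzy f ∧ ∀ x y u : H, u ∈ c x y → f y ≤ f u

def IsFuzzyRightIdeal {H : Type*} (c : H → H → Set H) (f : H → ℝ) : Prop :=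
  IsFuzzy f ∧ ∀ x y u : H, u ∈ c x y → f x ≤ f u

def IsFuzzyIdeal {H : Type*} (c : H → H → Set H) (f : H → ℝ) : Prop :=
  IsFuzzyLeftIdeal c f ∧ IsFuzzyRightIdeal c f

def IsFuzzyInteriorIdeal {H : Type*} (c : H → H → Set H) (f : H → ℝ) : Prop :=
  IsFuzzy f ∧ ∀ x a y u : H, u ∈ sProd c (c x a) {y} → f a ≤ f u

/-- Interior ideal: nonempty A with H*A*H ⊆ A. -/
def IsInteriorIdeal {H : Type*} (c : H → H → Set H) (A : Set H) : Prop :=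
  A.Nonempty ∧ sProd c (sProd c Set.univ A) Set.univ ⊆ A

def IsLeftIdeal {H : Type*} (c : H → H → Set H) (A : Set H) : Prop :=
  A.Nonempty ∧ sProd c Set.univ A ⊆ A

def IsRightIdeal {H : Type*} (c : H → H → Set H) (A : Set H) : Prop :=
  A.Nonempty ∧ sProd c A Set.univ ⊆ A

def IsIdeal {H : Type*} (c : H → H → Set H) (A : Set H) : Prop :=
  IsLeftIdeal c A ∧ IsRightIdeal c A

def IsRegularHyp {H : Type*} (c : H → H → Set H) : Prop :=
  ∀ a : H, ∃ x : H, a ∈ sProd c {a} (c x a)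

def IsIntraRegular {H : Type*} (c : H → H → Set H) : Prop :=
  ∀ a : H, ∃ x y : H, a ∈ sProd c (c x a) (c a y)

def IsSimple {H : Type*} (c : H → H → Set H) : Prop :=
  ∀ A : Set H, IsIdeal c A → A = Set.univ

open Classical in
/-- Characteristic function of a set. -/
noncomputable def charFun {H : Type*} (A : Set H) : H → ℝ :=
  fun x => if x ∈ A then 1 else 0

theorem stmt4 {H : Type*} [Nonempty H] (c : H → H → Set H)
    (hc : IsHypersemigroup c) (A : Set H) (hA : A.Nonempty)
    (h : IsInteriorIdeal c A) : IsFuzzyInteriorIdeal c (charFun A) := by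
  constructor
  · intro x
    unfold charFun
    split <;> simp
  · intro x a y u hu
    unfold charFun
    by_cases ha : a ∈ A
    · have hu' : u ∈ A := by
        apply h.2
        simp only [sProd, Set.mem_iUnion] at hu ⊢
        obtain ⟨v, hv, w, hw, huvw⟩ := hu
        simp only [Set.mem_singleton_iff] at hw
        exact ⟨v, ⟨x, Set.mem_univ x, a, ha, hv⟩, w, hw ▸ Set.mem_univ y, huvw⟩
      simp [ha, hu']
    · simp [ha]
      split <;> norm_num
end

section
/- In a hypersemigroup H, every fuzzy ideal of H is a fuzzy interior ideal of H. -/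
theorem stmt6 {H : Type*} [Nonempty H] (c : H → H → Set H)
    (hc : IsHypersemigroup c) (f : H → ℝ) (hf : IsFuzzyIdeal c f) :
    IsFuzzyInteriorIdeal c f := by
  obtain ⟨⟨hfz, hl⟩, ⟨_, hr⟩⟩ := hf
  refine ⟨hfz, fun x a y u hu => ?_⟩
  simp only [sProd, Set.mem_iUnion] at hu
  obtain ⟨v, hv, w, hw, huv⟩ := hu
  rcases hw with rfl
  exact le_trans (hl x a v hv) (hr v w u huv)
end

section
/- If H is a regular hypersemigroup and A is an interior ideal of H, then A is a subsemigroup of H, i.e., A*A ⊆ A. -/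
theorem stmt8 {H : Type*} [Nonempty H] (c : H → H → Set H)
    (hc : IsHypersemigroup c) (hr : IsRegularHyp c) (A : Set H)
    (hA : IsInteriorIdeal c A) : sProd c A A ⊆ A := by
  intro u hu
  simp only [sProd, Set.mem_iUnion] at hu
  obtain ⟨a, ha, b, hb, hu⟩ := hu
  obtain ⟨x, hx⟩ := hr a
  rw [hc.2 a x a] at hx
  simp only [sProd, Set.mem_iUnion] at hx
  obtain ⟨p, hp, a', ha', hpa⟩ := hx
  simp only [Set.mem_singleton_iff] at ha'
  subst ha'
  apply hA.2
  simp only [sProd, Set.mem_iUnion]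
  exact ⟨a', ⟨p, Set.mem_univ p, a', ha, hpa⟩, b, Set.mem_univ b, hu⟩
end

section
/- If H is a regular hypersemigroup and f is a fuzzy interior ideal of H, then f is a fuzzy ideal of H. -/
lemma mem_sProd_iff {H : Type*} (c : H → H → Set H) (A B : Set H) (u : H) :
    u ∈ sProd c A B ↔ ∃ a ∈ A, ∃ b ∈ B, u ∈ c a b := by
  simp [sProd]

theorem stmt9 {H : Type*} [Nonempty H] (c : H → H → Set H)
    (hc : IsHypersemigroup c) (hr : IsRegularHyp c) (f : H → ℝ)
    (hf : IsFuzzyInteriorIdeal c f) : IsFuzzyIdeal c f := by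
  obtain ⟨hfz, hint⟩ := hf
  constructor
  · refine ⟨hfz, fun x y u hu => ?_⟩
    obtain ⟨t, ht⟩ := hr y
    rw [mem_sProd_iff] at ht
    obtain ⟨a, ha, b, hb, hyb⟩ := ht
    rw [Set.mem_singleton_iff] at ha; rw [ha] at hyb
    -- y ∈ c y b; so u ∈ c x y ⊆ sProd {x} (c y b) = sProd (c x y) {b}
    have h1 : u ∈ sProd c {x} (c y b) := by
      rw [mem_sProd_iff]
      exact ⟨x, rfl, y, hyb, hu⟩
    rw [hc.2 x y b] at h1
    exact hint x y b u h1
  · refine ⟨hfz, fun x y u hu => ?_⟩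
    obtain ⟨t, ht⟩ := hr x
    rw [hc.2 x t x, mem_sProd_iff] at ht
    obtain ⟨s, hs, b, hb, hxb⟩ := ht
    rw [Set.mem_singleton_iff] at hb; rw [hb] at hxb
    -- x ∈ c s x with s ∈ c x t; so u ∈ c x y ⊆ sProd (c s x) {y}
    have h1 : u ∈ sProd c (c s x) {y} := by
      rw [mem_sProd_iff]
      exact ⟨x, hxb, y, rfl, hu⟩
    exact hint s x y u h1
end

section
/- In a regular hypersemigroup, a fuzzy subset is a fuzzy ideal if and only if it is a fuzzy interior ideal. -/
theorem stmt10 {H : Type*} [Nonempty H] (c : H → H → Set H)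
    (hc : IsHypersemigroup c) (hr : IsRegularHyp c) (f : H → ℝ) (hf : IsFuzzy f) :
    IsFuzzyIdeal c f ↔ IsFuzzyInteriorIdeal c f := by
  constructor
  · rintro ⟨⟨_, hl⟩, ⟨_, hrr⟩⟩
    refine ⟨hf, fun x a y u hu => ?_⟩
    simp only [sProd, Set.mem_iUnion, Set.mem_singleton_iff] at hu
    obtain ⟨t, ht, y', hw, hu⟩ := hu
    exact le_trans (hl x a t ht) (hrr t y' u hu)
  · rintro ⟨_, hi⟩
    have assoc := hc.2
    constructor
    · refine ⟨hf, fun x y u hu => ?_⟩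
      obtain ⟨z, hz⟩ := hr y
      simp only [sProd, Set.mem_iUnion, Set.mem_singleton_iff] at hz
      obtain ⟨y', hw, s, hs, hys⟩ := hz
      rw [hw] at hys
      -- hz : y ∈ ⋃ a ∈ {y}, ⋃ b ∈ c z y, c a b
      -- so s ∈ c z y, y ∈ c y s
      -- u ∈ c x y with y ∈ c y s... need u ∈ sProd c (c x y) {s}
      have hmem : u ∈ sProd c {x} (c y s) := by
        simp only [sProd, Set.mem_iUnion, Set.mem_singleton_iff]
        exact ⟨x, rfl, y, hys, hu⟩
      rw [assoc] at hmem
      exact hi x y s u hmem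
    · refine ⟨hf, fun x y u hu => ?_⟩
      obtain ⟨z, hz⟩ := hr x
      simp only [sProd, Set.mem_iUnion, Set.mem_singleton_iff] at hz
      obtain ⟨x', hw, s, hs, hxs⟩ := hz
      rw [hw] at hxs
      -- s ∈ c z x, x ∈ c x s; rewrite: x ∈ sProd c {x} (c z x) = sProd c (c x z) {x}
      have hx2 : x ∈ sProd c (c x z) {x} := by
        rw [← assoc]
        simp only [sProd, Set.mem_iUnion, Set.mem_singleton_iff]
        exact ⟨x, rfl, s, hs, hxs⟩
      simp only [sProd, Set.mem_iUnion, Set.mem_singleton_iff] at hx2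
      obtain ⟨p, hp, x', hw2, hxp⟩ := hx2
      rw [hw2] at hxp
      -- x ∈ c p x, p ∈ c x z; u ∈ c x y so u ∈ sProd c (c p x) {y}
      have hmem : u ∈ sProd c (c p x) {y} := by
        simp only [sProd, Set.mem_iUnion, Set.mem_singleton_iff]
        exact ⟨x, hxp, y, rfl, hu⟩
      exact hi p x y u hmem
end

section
/- If H is an intra-regular hypersemigroup and A is an interior ideal of H, then A is a subsemigroup of H, i.e., A*A ⊆ A. -/
theorem stmt12 {H : Type*} [Nonempty H] (c : H → H → Set H)
    (hc : IsHypersemigroup c) (hr : IsIntraRegular c) (A : Set H)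
    (hA : IsInteriorIdeal c A) : sProd c A A ⊆ A := by
  intro u hu
  simp only [sProd, Set.mem_iUnion] at hu
  obtain ⟨a, ha, b, hb, hu⟩ := hu
  obtain ⟨x, y, hxy⟩ := hr u
  simp only [sProd, Set.mem_iUnion] at hxy
  obtain ⟨v, hv, w, hw, huvw⟩ := hxy
  -- v ∈ c x u ⊆ sProd {x} (c a b) = sProd (c x a) {b}
  have hv' : v ∈ sProd c (c x a) {b} := by
    rw [← hc.2]
    simp only [sProd, Set.mem_iUnion]
    exact ⟨x, rfl, u, hu, hv⟩
  simp only [sProd, Set.mem_iUnion] at hv'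
  obtain ⟨p, hp, b', hb', hvpb⟩ := hv'
  have heq : b' = b := hb'
  subst heq
  apply hA.2
  simp only [sProd, Set.mem_iUnion]
  exact ⟨v, ⟨p, trivial, b', hb, hvpb⟩, w, trivial, huvw⟩
end

section
/- A hypergroupoid H is simple if and only if it is fuzzy simple, i.e., every fuzzy ideal of H is a constant function. -/
theorem stmt17 {H : Type*} [Nonempty H] (c : H → H → Set H)
    (hc : IsHypergroupoid c) :
    IsSimple c ↔ ∀ f : H → ℝ, IsFuzzyIdeal c f → ∀ a b : H, f a = f b := by
  constructor
  · intro hs f hf a b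
    have key : ∀ p q : H, f p ≤ f q := by
      intro p q
      set A : Set H := {x | f p ≤ f x} with hA
      have hid : IsIdeal c A := by
        refine ⟨⟨⟨p, le_refl (f p)⟩, ?_⟩, ⟨⟨p, le_refl (f p)⟩, ?_⟩⟩
        · intro u hu
          simp only [sProd, Set.mem_iUnion] at hu
          obtain ⟨x, -, y, hy, hu⟩ := hu
          exact le_trans hy (hf.1.2 x y u hu)
        · intro u hu
          simp only [sProd, Set.mem_iUnion] at hu
          obtain ⟨x, hx, y, -, hu⟩ := hu
          exact le_trans hx (hf.2.2 x y u hu)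
      have := hs A hid
      have : q ∈ A := this ▸ Set.mem_univ q
      exact this
    exact le_antisymm (key a b) (key b a)
  · intro hfs A hA
    have hchar : IsFuzzyIdeal c (charFun A) := by
      have hfuz : IsFuzzy (charFun A) := by
        intro x
        unfold charFun
        split <;> norm_num
      refine ⟨⟨hfuz, ?_⟩, ⟨hfuz, ?_⟩⟩
      · intro x y u hu
        unfold charFun
        by_cases hy : y ∈ A
        · have hu' : u ∈ A := by
            apply hA.1.2
            simp only [sProd, Set.mem_iUnion]
            exact ⟨x, Set.mem_univ x, y, hy, hu⟩
          simp [hy, hu']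
        · simp only [hy, if_neg, if_false]
          split <;> norm_num
      · intro x y u hu
        unfold charFun
        by_cases hx : x ∈ A
        · have hu' : u ∈ A := by
            apply hA.2.2
            simp only [sProd, Set.mem_iUnion]
            exact ⟨x, hx, y, Set.mem_univ y, hu⟩
          simp [hx, hu']
        · simp only [hx, if_neg, if_false]
          split <;> norm_num
    obtain ⟨a, ha⟩ := hA.1.1
    ext b
    simp only [Set.mem_univ, iff_true]
    have := hfs (charFun A) hchar a b
    unfold charFun at this
    simp [ha] at this
    by_contra hb
    simp [hb] at this
end

section
/- A hypersemigroup H is simple if and only if every fuzzy interior ideal of H is a constant function. -/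
lemma mem_sProd' {H : Type*} {c : H → H → Set H} {A B : Set H} {u : H} :
    u ∈ sProd c A B ↔ ∃ a ∈ A, ∃ b ∈ B, u ∈ c a b := by
  simp [sProd]

lemma sProd_mono {H : Type*} {c : H → H → Set H} {A A' B B' : Set H}
    (hA : A ⊆ A') (hB : B ⊆ B') : sProd c A B ⊆ sProd c A' B' := by
  intro u hu
  rcases mem_sProd'.1 hu with ⟨a, ha, b, hb, h⟩
  exact mem_sProd'.2 ⟨a, hA ha, b, hB hb, h⟩

lemma sProd_assoc' {H : Type*} {c : H → H → Set H}
    (hc : ∀ x y z : H, sProd c {x} (c y z) = sProd c (c x y) {z})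
    (A B C : Set H) : sProd c (sProd c A B) C = sProd c A (sProd c B C) := by
  ext u
  simp only [mem_sProd']
  constructor
  · rintro ⟨t, ⟨a, ha, b, hb, ht⟩, z, hz, hu⟩
    have h1 : u ∈ sProd c (c a b) {z} := mem_sProd'.2 ⟨t, ht, z, rfl, hu⟩
    rw [← hc a b z] at h1
    rcases mem_sProd'.1 h1 with ⟨a', ha', s, hs, hu'⟩
    rcases ha' with rfl
    exact ⟨a', ha, s, ⟨b, hb, z, hz, hs⟩, hu'⟩
  · rintro ⟨a, ha, s, ⟨b, hb, z, hz, hs⟩, hu⟩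
    have h1 : u ∈ sProd c {a} (c b z) := mem_sProd'.2 ⟨a, rfl, s, hs, hu⟩
    rw [hc a b z] at h1
    rcases mem_sProd'.1 h1 with ⟨t, ht, z', hz', hu'⟩
    rcases hz' with rfl
    exact ⟨t, ⟨a, ha, b, hb, ht⟩, z', hz, hu'⟩

theorem stmt18 {H : Type*} [Nonempty H] (c : H → H → Set H)
    (hc : IsHypersemigroup c) :
    IsSimple c ↔ ∀ f : H → ℝ, IsFuzzyInteriorIdeal c f →
      ∀ a b : H, f a = f b := by
  obtain ⟨hgrp, hassoc⟩ := hc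
  constructor
  · -- simple → fuzzy interior ideals constant
    intro hs f hf a b
    have key : ∀ a : H, sProd c (sProd c Set.univ {a}) Set.univ = Set.univ := by
      intro a
      apply hs
      have hne : (sProd c (sProd c Set.univ {a}) Set.univ).Nonempty := by
        obtain ⟨h0⟩ := ‹Nonempty H›
        obtain ⟨t, ht⟩ := hgrp h0 a
        obtain ⟨u, hu⟩ := hgrp t h0
        exact ⟨u, mem_sProd'.2 ⟨t, mem_sProd'.2 ⟨h0, trivial, a, rfl, ht⟩,
          h0, trivial, hu⟩⟩
      constructor
      · refine ⟨hne, ?_⟩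
        intro u hu
        rcases mem_sProd'.1 hu with ⟨w, -, t, ht, hu1⟩
        rcases mem_sProd'.1 ht with ⟨s, hsm, y, -, ht1⟩
        rcases mem_sProd'.1 hsm with ⟨x, -, a', ha', hs1⟩
        rcases ha' with rfl
        have h2 : u ∈ sProd c (c w s) {y} := by
          rw [← hassoc]; exact mem_sProd'.2 ⟨w, rfl, t, ht1, hu1⟩
        rcases mem_sProd'.1 h2 with ⟨t', ht', y', hy', hu2⟩
        rcases hy' with rfl
        have h3 : t' ∈ sProd c (c w x) {a'} := by
          rw [← hassoc]; exact mem_sProd'.2 ⟨w, rfl, s, hs1, ht'⟩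
        rcases mem_sProd'.1 h3 with ⟨p, hp, a'', ha'', ht2⟩
        rcases ha'' with rfl
        exact mem_sProd'.2 ⟨t', mem_sProd'.2 ⟨p, trivial, a'', rfl, ht2⟩,
          y', trivial, hu2⟩
      · refine ⟨hne, ?_⟩
        intro u hu
        rcases mem_sProd'.1 hu with ⟨t, ht, z, -, hu1⟩
        rcases mem_sProd'.1 ht with ⟨s, hsm, y, -, ht1⟩
        have h2 : u ∈ sProd c {s} (c y z) := by
          rw [hassoc]; exact mem_sProd'.2 ⟨t, ht1, z, rfl, hu1⟩
        rcases mem_sProd'.1 h2 with ⟨s', hs', q, hq, hu2⟩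
        rcases hs' with rfl
        exact mem_sProd'.2 ⟨s', hsm, q, trivial, hu2⟩
    have main : ∀ a b : H, f a ≤ f b := by
      intro a b
      have hb : b ∈ sProd c (sProd c Set.univ {a}) Set.univ := by
        rw [key a]; trivial
      rcases mem_sProd'.1 hb with ⟨t, ht, y, -, hby⟩
      rcases mem_sProd'.1 ht with ⟨x, -, a', ha', hta⟩
      rcases ha' with rfl
      exact hf.2 x a' y b (mem_sProd'.2 ⟨t, hta, y, rfl, hby⟩)
    exact le_antisymm (main a b) (main b a)
  · -- constant fuzzy interior ideals → simple
    intro hconst A hA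
    obtain ⟨⟨hAne, hL⟩, ⟨-, hR⟩⟩ := hA
    have hint : sProd c (sProd c Set.univ A) Set.univ ⊆ A := by
      intro u hu
      rw [sProd_assoc' hassoc] at hu
      rcases mem_sProd'.1 hu with ⟨w, hw, t, ht, hu1⟩
      apply hL
      exact mem_sProd'.2 ⟨w, hw, t, hR ht, hu1⟩
    have hfuzzy : IsFuzzyInteriorIdeal c (charFun A) := by
      constructor
      · intro x
        unfold charFun
        split <;> norm_num
      · intro x a y u hu
        by_cases ha : a ∈ A
        · have hu' : u ∈ A := by
            apply hint
            rcases mem_sProd'.1 hu with ⟨t, ht, y', hy', h⟩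
            exact mem_sProd'.2 ⟨t, mem_sProd'.2 ⟨x, trivial, a, ha, ht⟩,
              y', trivial, h⟩
          simp [charFun, ha, hu']
        · simp only [charFun, ha, if_false]
          split <;> norm_num
    ext b
    simp only [Set.mem_univ, iff_true]
    obtain ⟨a0, ha0⟩ := hAne
    have h := hconst (charFun A) hfuzzy b a0
    simp only [charFun, ha0, if_true] at h
    by_contra hb
    simp [hb] at h
end
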